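/- arXiv:1407.1547 — 8 statements merged into one kernel-verified Lean document; each statement's English description precedes it below -/
import Mathlib

section
/- Let X be a coherence space (a set of tokens with a reflexive symmetric coherence relation, whose points are coherent subsets ordered by inclusion). Call a subset A of the points of X an antichain if any two coherent members of A (i.e., members whose union is again a point) are equal. Identify an antichain with the upward-closed set C of points it generates, i.e., an upward-closed set C such that every element of C lies above some minimal element of C, and any two coherent minimal elements of C are equal. Then the collection of such antichain sets, partially ordered by reverse inclusion, forms a complete lattice; in particular, the intersection of any family of antichain sets is again an antichain set. -/
/-- A point of a coherence space: a set of tokens whose members are pairwise coherent. -/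
def IsPoint {α : Type*} (coh : α → α → Prop) (x : Set α) : Prop :=
  ∀ a ∈ x, ∀ b ∈ x, coh a b

/-- The points of the coherence space with web `α` and coherence `coh`. -/
def Point {α : Type*} (coh : α → α → Prop) : Type _ := {x : Set α // IsPoint coh x}

/-- A set of points is upward closed. -/
def UpClosed {α : Type*} {coh : α → α → Prop} (C : Set (Point coh)) : Prop :=
  ∀ x ∈ C, ∀ y : Point coh, x.1 ⊆ y.1 → y ∈ C

/-- `m` is a minimal element of `C`. -/
def MinimalIn {α : Type*} {coh : α → α → Prop} (C : Set (Point coh)) (m : Point coh) : Prop :=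
  m ∈ C ∧ ∀ y ∈ C, y.1 ⊆ m.1 → y = m

/-- An antichain, identified with the upward-closed set of points it generates:
an upward-closed set `C` such that every element of `C` lies above some minimal
element of `C`, and any two coherent minimal elements of `C` are equal. -/
def IsAntichainSet {α : Type*} (coh : α → α → Prop) (C : Set (Point coh)) : Prop :=
  UpClosed C ∧
  (∀ x ∈ C, ∃ m : Point coh, MinimalIn C m ∧ m.1 ⊆ x.1) ∧
  (∀ m m' : Point coh, MinimalIn C m → MinimalIn C m' →
      IsPoint coh (m.1 ∪ m'.1) → m = m')

/-- The intersection of any family of antichain sets is an antichain set. -/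
theorem iInter_isAntichainSet {α : Type*} {coh : α → α → Prop}
    {I : Type*} (C : I → Set (Point coh)) (hC : ∀ i, IsAntichainSet coh (C i)) :
    IsAntichainSet coh (⋂ i, C i) := by
  refine ⟨?_, ?_, ?_⟩
  · intro x hx y hxy
    simp only [Set.mem_iInter] at hx ⊢
    exact fun i => (hC i).1 x (hx i) y hxy
  · intro x hx
    simp only [Set.mem_iInter] at hx
    choose m hm hmx using fun i => (hC i).2.1 x (hx i)
    have hpt : IsPoint coh (⋃ i, (m i).1) := by
      intro a ha b hb
      simp only [Set.mem_iUnion] at ha hb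
      obtain ⟨i, ha⟩ := ha; obtain ⟨j, hb⟩ := hb
      exact x.2 a (hmx i ha) b (hmx j hb)
    refine ⟨⟨⋃ i, (m i).1, hpt⟩, ⟨?_, ?_⟩, Set.iUnion_subset hmx⟩
    · refine Set.mem_iInter.mpr ?_
      exact fun i => (hC i).1 (m i) (hm i).1 _ (Set.subset_iUnion (fun i => (m i).1) i)
    · intro y hy hysub
      simp only [Set.mem_iInter] at hy
      have key : ∀ i, (m i).1 ⊆ y.1 := by
        intro i
        obtain ⟨m', hm', hm'y⟩ := (hC i).2.1 y (hy i)
        have hsubx : m'.1 ⊆ x.1 := hm'y.trans (hysub.trans (Set.iUnion_subset hmx))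
        have heq : m' = m i := by
          apply (hC i).2.2 m' (m i) hm' (hm i)
          intro a ha b hb
          have ha' : a ∈ x.1 := by rcases ha with ha | ha; exacts [hsubx ha, hmx i ha]
          have hb' : b ∈ x.1 := by rcases hb with hb | hb; exacts [hsubx hb, hmx i hb]
          exact x.2 a ha' b hb'
        rw [← heq]; exact hm'y
      exact Subtype.ext (Set.Subset.antisymm hysub (Set.iUnion_subset key))
  · intro m m' hm hm' hcoh
    have hmI : ∀ i, m ∈ C i := Set.mem_iInter.mp hm.1
    have hm'I : ∀ i, m' ∈ C i := Set.mem_iInter.mp hm'.1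
    choose a ha ham using fun i => (hC i).2.1 m (hmI i)
    choose a' ha' ha'm using fun i => (hC i).2.1 m' (hm'I i)
    have heq : ∀ i, a i = a' i := by
      intro i
      apply (hC i).2.2 _ _ (ha i) (ha' i)
      intro p hp q hq
      have hp' : p ∈ m.1 ∪ m'.1 := by
        rcases hp with hp | hp; exacts [Or.inl (ham i hp), Or.inr (ha'm i hp)]
      have hq' : q ∈ m.1 ∪ m'.1 := by
        rcases hq with hq | hq; exacts [Or.inl (ham i hq), Or.inr (ha'm i hq)]
      exact hcoh p hp' q hq'
    have hpt : IsPoint coh (⋃ i, (a i).1) := by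
      intro p hp q hq
      simp only [Set.mem_iUnion] at hp hq
      obtain ⟨i, hp⟩ := hp; obtain ⟨j, hq⟩ := hq
      exact m.2 p (ham i hp) q (ham j hq)
    set u : Point coh := ⟨⋃ i, (a i).1, hpt⟩ with hu
    have huC : u ∈ ⋂ i, C i := by
      simp only [Set.mem_iInter]
      exact fun i => (hC i).1 (a i) (ha i).1 u (Set.subset_iUnion (fun i => (a i).1) i)
    have hum : u.1 ⊆ m.1 := Set.iUnion_subset ham
    have hum' : u.1 ⊆ m'.1 := by
      refine Set.iUnion_subset fun i => ?_
      rw [heq i]; exact ha'm i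
    have h1 : u = m := hm.2 u huC hum
    have h2 : u = m' := hm'.2 u huC hum'
    rw [← h1, ← h2]

/-- The antichain sets of a coherence space, ordered by reverse inclusion, form a
complete lattice: the intersection of any family of antichain sets is again an
antichain set (this gives arbitrary suprema w.r.t. `⊇`), and arbitrary infima
(w.r.t. `⊇`) exist as well. -/
theorem antichainSets_completeLattice {α : Type*}
    (coh : α → α → Prop) (hrefl : ∀ a, coh a a) (hsymm : ∀ a b, coh a b → coh b a)
    {I : Type*} (C : I → Set (Point coh)) (hC : ∀ i, IsAntichainSet coh (C i)) :
    IsAntichainSet coh (⋂ i, C i) ∧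
    ∃ G : Set (Point coh), IsAntichainSet coh G ∧ (∀ i, C i ⊆ G) ∧
      ∀ B : Set (Point coh), IsAntichainSet coh B → (∀ i, C i ⊆ B) → G ⊆ B := by
  refine ⟨iInter_isAntichainSet C hC, ?_⟩
  refine ⟨⋂ B : {B : Set (Point coh) // IsAntichainSet coh B ∧ ∀ i, C i ⊆ B}, B.1,
    iInter_isAntichainSet _ (fun B => B.2.1), ?_, ?_⟩
  · intro i x hx
    simp only [Set.mem_iInter]
    exact fun B => B.2.2 i hx
  · intro B hB hCB x hx
    exact Set.mem_iInter.mp hx ⟨B, hB, hCB⟩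
end

section
/- In a coherence space, if (C_i)_{i∈I} is a family of antichain sets (upward-closed sets of points satisfying the two antichain conditions), x is a point belonging to every C_i, and for each i, x_i denotes the unique minimal element of C_i below x, then the supremum m(x) of the family (x_i)_{i∈I} exists (being bounded above by x), belongs to the intersection D of the C_i, and is a minimal element of D below x. -/
/-- If `(C i)` is a family of antichain sets, `x` a point in every `C i`, and `x_i` the
(unique) minimal element of `C i` below `x`, then the supremum `m x` of the family `(x_i)`
exists (as a point, its carrier being the bounded union `⋃ i, x_i`), it lies below `x`,
belongs to the intersection `D` of the `C i`, and is a minimal element of `D` below `x`. -/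
theorem sup_of_minimals_is_minimal {α : Type*}
    (coh : α → α → Prop) (hrefl : ∀ a, coh a a) (hsymm : ∀ a b, coh a b → coh b a)
    {I : Type*} (C : I → Set (Point coh)) (hC : ∀ i, IsAntichainSet coh (C i))
    (x : Point coh) (hx : ∀ i, x ∈ C i)
    (xi : I → Point coh)
    (hmin : ∀ i, MinimalIn (C i) (xi i))
    (hle : ∀ i, (xi i).1 ⊆ x.1) :
    ∃ m : Point coh, m.1 = ⋃ i, (xi i).1 ∧ m.1 ⊆ x.1 ∧
      m ∈ ⋂ i, C i ∧ MinimalIn (⋂ i, C i) m := by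
  have hsub : (⋃ i, (xi i).1) ⊆ x.1 := Set.iUnion_subset hle
  have hpt : IsPoint coh (⋃ i, (xi i).1) := fun a ha b hb =>
    x.2 a (hsub ha) b (hsub hb)
  refine ⟨⟨⋃ i, (xi i).1, hpt⟩, rfl, hsub, ?_, ?_⟩
  · exact Set.mem_iInter.2 fun i =>
      (hC i).1 (xi i) (hmin i).1 _ (Set.subset_iUnion (fun j => (xi j).1) i)
  · refine ⟨Set.mem_iInter.2 fun i =>
      (hC i).1 (xi i) (hmin i).1 _ (Set.subset_iUnion (fun j => (xi j).1) i), ?_⟩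
    intro y hy hysub
    have hyC : ∀ i, y ∈ C i := fun i => Set.mem_iInter.1 hy i
    have key : ∀ i, (xi i).1 ⊆ y.1 := by
      intro i
      obtain ⟨mi, hmi, hmiy⟩ := (hC i).2.1 y (hyC i)
      have : mi = xi i := by
        apply (hC i).2.2 mi (xi i) hmi (hmin i)
        intro a ha b hb
        have ha' : a ∈ x.1 := by
          rcases ha with h | h
          · exact hsub (hysub (hmiy h))
          · exact hle i h
        have hb' : b ∈ x.1 := by
          rcases hb with h | h
          · exact hsub (hysub (hmiy h))
          · exact hle i h
        exact x.2 a ha' b hb'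
      exact this ▸ hmiy
    refine Subtype.ext ?_
    exact le_antisymm hysub (Set.iUnion_subset key)
end

section
/- In the Scott-domain classical realizability structure, validity is deductively closed under implication: for biorthogonally closed truth values A, B ⊆ D (upward closed, with A = ||A||^⊥ for falsity sets ||A|| of stacks), the implication A → B := { t ∈ D : ∀ s ∈ A, ∀ π ∈ ||B||, t ⋆ (s·π) ∈ ⫫ } contains the top proof-like element Φ if and only if (Φ ∈ A implies Φ ∈ B). Equivalently: A → B holds iff (A holds implies B holds). -/
/-- Push a term onto a stack (stream). -/
def consStk {D : Type*} (s : D) (π : ℕ → D) : ℕ → D :=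
  fun n => match n with
  | 0 => s
  | n + 1 => π n

/-- Scott-domain classical realizability: validity is deductively closed under
implication.  `D` is ordered, `ev` is evaluation of a term against a stack, monotone in
the term; `P` is the set of proof-like terms, characterized by `t ∈ P` iff `ev t π = ⊥`
for all proof-like stacks `π` (those with all entries in `P`); `Φ` is the top element of
`P` and `ev Φ π = ⊥` iff `π` is proof-like.  For truth values `A = SA^⊥`, `B = SB^⊥`
(upward closed by monotonicity of `ev`) and the implication
`A → B = { t | ∀ s ∈ A, ∀ π ∈ SB, t ⋆ (s·π) ∈ ⫫ }`:
`Φ ∈ A → B` iff (`Φ ∈ A` implies `Φ ∈ B`); equivalently, `A → B` holds iff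
(`A` holds implies `B` holds). -/
theorem scott_implication_validity
    {D : Type*} [PartialOrder D]
    (ev : D → (ℕ → D) → Bool)
    (hmono : ∀ t u : D, t ≤ u → ∀ π, ev t π = true → ev u π = true)
    (P : Set D) (Φ : D)
    (hP : ∀ t : D, t ∈ P ↔ ∀ π : ℕ → D, (∀ n, π n ∈ P) → ev t π = false)
    (hΦP : Φ ∈ P) (hΦtop : ∀ t ∈ P, t ≤ Φ)
    (hΦ : ∀ π : ℕ → D, (ev Φ π = false ↔ ∀ n, π n ∈ P))
    (SA SB : Set (ℕ → D)) :
    (Φ ∈ {t : D | ∀ s ∈ {t : D | ∀ π ∈ SA, ev t π = true}, ∀ π ∈ SB,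
            ev t (consStk s π) = true} ↔
        (Φ ∈ {t : D | ∀ π ∈ SA, ev t π = true} → Φ ∈ {t : D | ∀ π ∈ SB, ev t π = true})) ∧
    (({t : D | ∀ s ∈ {t : D | ∀ π ∈ SA, ev t π = true}, ∀ π ∈ SB,
            ev t (consStk s π) = true} ∩ P).Nonempty ↔
        (({t : D | ∀ π ∈ SA, ev t π = true} ∩ P).Nonempty →
          ({t : D | ∀ π ∈ SB, ev t π = true} ∩ P).Nonempty)) := by
  set A := {t : D | ∀ π ∈ SA, ev t π = true} with hA
  set B := {t : D | ∀ π ∈ SB, ev t π = true} with hB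
  set I := {t : D | ∀ s ∈ A, ∀ π ∈ SB, ev t (consStk s π) = true} with hI
  have up : ∀ (C : Set D), (∀ t u : D, t ≤ u → t ∈ C → u ∈ C) →
      ((C ∩ P).Nonempty ↔ Φ ∈ C) := by
    intro C hC
    constructor
    · rintro ⟨t, htC, htP⟩
      exact hC t Φ (hΦtop t htP) htC
    · intro h
      exact ⟨Φ, h, hΦP⟩
  have upA : ∀ t u : D, t ≤ u → t ∈ A → u ∈ A := by
    intro t u htu ht π hπ
    exact hmono t u htu π (ht π hπ)
  have upB : ∀ t u : D, t ≤ u → t ∈ B → u ∈ B := by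
    intro t u htu ht π hπ
    exact hmono t u htu π (ht π hπ)
  have upI : ∀ t u : D, t ≤ u → t ∈ I → u ∈ I := by
    intro t u htu ht s hs π hπ
    exact hmono t u htu _ (ht s hs π hπ)
  have part1 : Φ ∈ I ↔ (Φ ∈ A → Φ ∈ B) := by
    constructor
    · intro hΦI hΦA π hπ
      have h1 : ev Φ (consStk Φ π) = true := hΦI Φ hΦA π hπ
      by_contra hfalse
      have hf : ev Φ π = false := by
        cases h : ev Φ π with
        | false => rfl
        | true => exact absurd h hfalse
      have hall : ∀ n, π n ∈ P := (hΦ π).mp hf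
      have hall' : ∀ n, (consStk Φ π) n ∈ P := by
        intro n
        cases n with
        | zero => exact hΦP
        | succ n => exact hall n
      have := (hΦ (consStk Φ π)).mpr hall'
      rw [h1] at this
      exact Bool.noConfusion this
    · intro hAB s hs π hπ
      by_contra hfalse
      have hf : ev Φ (consStk s π) = false := by
        cases h : ev Φ (consStk s π) with
        | false => rfl
        | true => exact absurd h hfalse
      have hall : ∀ n, (consStk s π) n ∈ P := (hΦ _).mp hf
      have hsP : s ∈ P := hall 0
      have hΦA : Φ ∈ A := upA s Φ (hΦtop s hsP) hs
      have hΦB : Φ ∈ B := hAB hΦA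
      have htrue : ev Φ π = true := hΦB π hπ
      have hf2 : ev Φ π = false := (hΦ π).mpr (fun n => hall (n + 1))
      rw [htrue] at hf2
      exact Bool.noConfusion hf2
  refine ⟨part1, ?_⟩
  rw [up I upI, up A upA, up B upB]
  exact part1
end

section
/- In the setting of the previous context (the realizability structure on D ≅ Σ^{D^ω}), with U = {⊤_D} where ⊤_D is the element with ⊤_D(s⃗) = ⊤ for all s⃗, the term cc uniformly realizes j_U(A) → A for all biorthogonally closed A: if t ∈ (A → U) → U and s⃗ ∈ A^⊥, then cc(t·s⃗) = ⊤. Conversely, η = λx.λp.px (i.e., the element with η(x·p·r⃗) = p(x·r⃗)) realizes A → j_U(A) for all A ⊆ D. -/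
/-- Stacks orthogonal to a set of terms (w.r.t. the pole `{(t,π) : ev t π = ⊤}`). -/
def sorth {D : Type*} (ev : D → (ℕ → D) → Bool) (A : Set D) : Set (ℕ → D) :=
  {π | ∀ t ∈ A, ev t π = true}

/-- Terms orthogonal to a set of stacks. -/
def torth {D : Type*} (ev : D → (ℕ → D) → Bool) (S : Set (ℕ → D)) : Set D :=
  {t | ∀ π ∈ S, ev t π = true}

/-- Implication of truth values. -/
def impSet {D : Type*} (ev : D → (ℕ → D) → Bool) (A B : Set D) : Set D :=
  {t | ∀ s ∈ A, ∀ π ∈ sorth ev B, ev t (consStk s π) = true}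

/-- With `U = {⊤_D}` (the element evaluating every stack to `⊤`), `cc` uniformly
realizes `j_U(A) → A` for all biorthogonally closed `A`, and `η = λx.λp.px` realizes
`A → j_U(A)` for all `A ⊆ D`, where `j_U(A) = (A → U) → U`. -/
theorem cc_eta_realize_jU {D : Type*}
    (ev : D → (ℕ → D) → Bool)
    (app : D → D → D) (happ : ∀ t s r, ev (app t s) r = ev t (consStk s r))
    (k : (ℕ → D) → D) (hk : ∀ s t r, ev (k s) (consStk t r) = ev t s)
    (cc : D) (hcc : ∀ t s, ev cc (consStk t s) = ev t (consStk (k s) s))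
    (Dtop : D) (htop : ∀ π, ev Dtop π = true)
    (η : D) (hη : ∀ x p r, ev η (consStk x (consStk p r)) = ev p (consStk x r)) :
    (∀ A : Set D, torth ev (sorth ev A) = A →
      cc ∈ impSet ev (impSet ev (impSet ev A {Dtop}) {Dtop}) A) ∧
    (∀ A : Set D, η ∈ impSet ev A (impSet ev (impSet ev A {Dtop}) {Dtop})) := by
  constructor
  · intro A hA t ht π hπ
    rw [hcc]
    apply ht
    · intro s hs ρ _
      rw [hk]
      exact hπ s hs
    · intro u hu
      simp only [Set.mem_singleton_iff] at hu
      subst hu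
      exact htop _
  · intro A x hx π hπ
    have hmem : app η x ∈ impSet ev (impSet ev A {Dtop}) {Dtop} := by
      intro p hp ρ _
      rw [happ, hη]
      apply hp x hx
      intro u hu
      simp only [Set.mem_singleton_iff] at hu
      subst hu
      exact htop _
    have := hπ (app η x) hmem
    rwa [happ] at this
end

section
/- In the coherence-space model of D ≅ Σ^{D^ω}, there is no proof-like realizer of the 'forcing' condition: if f : D × D → Σ-valued, i.e., f ∈ D with f ⊤_D ⊥_D = ⊤_D and f ⊥_D ⊤_D = ⊤_D (f realizes |⊤,⊥→⊥| ∩ |⊥,⊤→⊥|), then by stability f ⊥_D ⊥_D = ⊤_D, hence f ∉ P (f is not proof-like). Abstractly: any stable function g : D × D → Σ with g(⊤_D, ⊥_D) = ⊤ = g(⊥_D, ⊤_D) satisfies g(⊥_D, ⊥_D) = ⊤. -/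
/-- In the coherence-space model there is no proof-like realizer of the forcing
condition: any stable (monotone, preserving meets of bounded pairs) function
`g : D × D → Σ` with `g(⊤_D, ⊥) = ⊤` and `g(⊥, ⊤_D) = ⊤` satisfies
`g(⊥, ⊥) = ⊤`; hence `g` does not belong to any set `P` of proof-like terms all of whose
members `f` satisfy `f(⊥,⊥) ≠ ⊤`. -/
theorem stable_forcing_realizer_not_prooflike
    {D : Type*} [SemilatticeInf D] [OrderBot D] (Dtop : D)
    (g : D × D → Bool)
    (hmono : Monotone g)
    (hstab : ∀ p q : D × D, (∃ r, p ≤ r ∧ q ≤ r) → g (p ⊓ q) = g p ⊓ g q)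
    (h1 : g (Dtop, ⊥) = true) (h2 : g (⊥, Dtop) = true) :
    g (⊥, ⊥) = true ∧
    ∀ P : Set (D × D → Bool), (∀ f ∈ P, f (⊥, ⊥) ≠ true) → g ∉ P := by
  have key : g (⊥, ⊥) = true := by
    have h := hstab (Dtop, ⊥) (⊥, Dtop)
      ⟨(Dtop, Dtop), ⟨le_refl _, bot_le⟩, ⟨bot_le, le_refl _⟩⟩
    have hmeet : ((Dtop, ⊥) : D × D) ⊓ (⊥, Dtop) = (⊥, ⊥) := by
      simp [Prod.ext_iff]
    rw [hmeet, h1, h2] at h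
    simpa using h
  exact ⟨key, fun P hP hg => hP g hg key⟩
end

section
/- Krivine-style truth of arithmetic in K: define validity of closed prenex arithmetic sentences by recursion — an equation e₁ = e₂ with common value n is realized by the numeral n̄ ∈ P; ∀x.A(x) is realized by any t ∈ P with t ⊤_D = ⊤_D and t n̄ = p_n where p_n realizes A(n); ∃x.A(x) is realized by λf. f n̄ p when p realizes A(n). Then every true closed arithmetic sentence in prenex form has a proof-like realizer. (Abstract version: given a family of numerals n̄ ∈ P, and given that P is closed under the indicated constructions, truth implies realizability by induction on the prenex prefix.) -/
/-- Closed arithmetic sentences in prenex form: a prefix of quantifiers over `ℕ`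
followed by an equation between (already evaluated) arithmetic terms. -/
inductive PSent where
  | eq : ℕ → ℕ → PSent
  | all : (ℕ → PSent) → PSent
  | ex : (ℕ → PSent) → PSent

/-- Truth of a prenex sentence in the standard model. -/
def PSent.tv : PSent → Prop
  | .eq a b => a = b
  | .all A => ∀ n, (A n).tv
  | .ex A => ∃ n, (A n).tv

/-- Krivine-style truth of arithmetic in `K` (abstract version): given numerals
`n̄ ∈ P`, an interpretation `sem` of sentences as truth values such that an equation
with common value `n` is realized by `n̄`, any `t` with `t ⊤_D = ⊤_D` and `t n̄` a
realizer of `A(n)` realizes `∀x.A(x)`, and `λf. f n̄ p` (here `exwit n p`) realizes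
`∃x.A(x)` when `p` realizes `A(n)`; and given that `P` is closed under the indicated
constructions — then every true closed prenex sentence has a proof-like realizer. -/
theorem true_prenex_sentences_realized {D : Type*}
    (P : Set D) (Dtop : D) (num : ℕ → D) (app : D → D → D) (exwit : ℕ → D → D)
    (sem : PSent → Set D)
    (hnum : ∀ n, num n ∈ P)
    (heq : ∀ a b : ℕ, a = b → num a ∈ sem (.eq a b))
    (hall : ∀ (A : ℕ → PSent) (t : D), app t Dtop = Dtop →
        (∀ n, app t (num n) ∈ sem (A n)) → t ∈ sem (.all A))
    (hmix : ∀ p : ℕ → D, (∀ n, p n ∈ P) →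
        ∃ t ∈ P, app t Dtop = Dtop ∧ ∀ n, app t (num n) = p n)
    (hex : ∀ (A : ℕ → PSent) (n : ℕ) (p : D), p ∈ sem (A n) → exwit n p ∈ sem (.ex A))
    (hexP : ∀ (n : ℕ) (p : D), p ∈ P → exwit n p ∈ P) :
    ∀ S : PSent, S.tv → ∃ t ∈ P, t ∈ sem S := by
  intro S
  induction S with
  | eq a b => exact fun h => ⟨num a, hnum a, heq a b h⟩
  | all A ih =>
      intro h
      choose p hp hsem using fun n => ih n (h n)
      obtain ⟨t, htP, htop, hteq⟩ := hmix p hp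
      exact ⟨t, htP, hall A t htop (fun n => (hteq n) ▸ hsem n)⟩
  | ex A ih =>
      intro ⟨n, hn⟩
      obtain ⟨p, hpP, hps⟩ := ih n hn
      exact ⟨exwit n p, hexP n p hpP, hex A n p hps⟩
end

section
/- Countable-branching tree lemma for 2-valuedness: let (t_n) be a sequence of elements of D (stable functions D^ω → Σ) with nested acceptance sets t_{n+1}^{-1}(⊤) ⊆ t_n^{-1}(⊤), and let A = {t_n : n ∈ ω}^⊥⊥. Suppose A^⊥ ∩ P^ω = ∅, where A^⊥ = ⋂_n t_n^{-1}(⊤) is the set of stacks accepted by all t_n. Then there exists t ∈ P with A^⊥ ⊆ t^{-1}(⊤), i.e., A ∩ P ≠ ∅. Abstractly: if every minimal element of A^⊥ is the supremum of an increasing chain of finite approximants s⃗^{(n)} ∈ tr(t_n), and every such chain eventually leaves P^ω, then the element t whose trace consists of the first approximants outside P^ω is proof-like and accepts all of A^⊥. -/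
/-- Countable-branching tree lemma for 2-valuedness (abstract version).
`S` is the poset of stacks; `T n = t_n⁻¹(⊤)` are the nested acceptance sets of the
sequence `(t_n)`, `tr n` the trace of `t_n` (so every accepted stack has a unique trace
approximant below it); `PΩ = P^ω` is the downward-closed set of proof-like stacks,
closed under suprema of chains of its elements; every element of `A^⊥ = ⋂ n, T n` lies
above a minimal one which is the supremum of its chain of trace approximants; and
`A^⊥ ∩ P^ω = ∅`.  Then the "first approximants outside `P^ω`" form the trace of a
proof-like element accepting all of `A^⊥`: that trace misses `P^ω`, and every stack in
`A^⊥` has a unique member of it below. -/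
theorem tree_lemma_prooflike_acceptor {S : Type*} [PartialOrder S]
    (T : ℕ → Set S) (hnest : ∀ n, T (n + 1) ⊆ T n)
    (tr : ℕ → Set S) (htr : ∀ n, tr n ⊆ T n)
    (happrox : ∀ n, ∀ s ∈ T n, ∃! r, r ∈ tr n ∧ r ≤ s)
    (PΩ : Set S) (hPdown : ∀ r s : S, r ≤ s → s ∈ PΩ → r ∈ PΩ)
    (hPlub : ∀ c : Set S, c ⊆ PΩ → IsChain (· ≤ ·) c → ∀ m, IsLUB c m → m ∈ PΩ)
    (hminsup : ∀ s ∈ ⋂ n, T n, ∃ m, m ≤ s ∧ m ∈ (⋂ n, T n) ∧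
        IsLUB {r | ∃ n, r ∈ tr n ∧ r ≤ s} m)
    (hdisj : (⋂ n, T n) ∩ PΩ = ∅) :
    {r | ∃ n, r ∈ tr n ∧ r ∉ PΩ ∧ ∀ k < n, ∀ q ∈ tr k, q ≤ r → q ∈ PΩ} ∩ PΩ = ∅ ∧
    ∀ s ∈ ⋂ n, T n, ∃! r,
      r ∈ {r | ∃ n, r ∈ tr n ∧ r ∉ PΩ ∧ ∀ k < n, ∀ q ∈ tr k, q ≤ r → q ∈ PΩ} ∧
      r ≤ s := by
  constructor
  · ext x
    simp only [Set.mem_inter_iff, Set.mem_setOf_eq, Set.mem_empty_iff_false, iff_false, not_and]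
    rintro ⟨n, _, hx, _⟩ hxP
    exact hx hxP
  · intro s hs
    have hsT : ∀ n, s ∈ T n := fun n => Set.mem_iInter.mp hs n
    have H : ∀ n, ∃ r, (r ∈ tr n ∧ r ≤ s) ∧ ∀ y, y ∈ tr n ∧ y ≤ s → y = r :=
      fun n => happrox n s (hsT n)
    choose r hr using H
    have hrtr : ∀ n, r n ∈ tr n := fun n => (hr n).1.1
    have hrle : ∀ n, r n ≤ s := fun n => (hr n).1.2
    have hruniq : ∀ n y, y ∈ tr n ∧ y ≤ s → y = r n := fun n => (hr n).2
    have hTsub : ∀ k n, k ≤ n → T n ⊆ T k := by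
      intro k n h
      induction h with
      | refl => exact subset_rfl
      | step h ih => exact (hnest _).trans ih
    have hmono : ∀ k n, k ≤ n → r k ≤ r n := by
      intro k n h
      have hrnTk : r n ∈ T k := hTsub k n h (htr n (hrtr n))
      obtain ⟨q, ⟨hqtr, hqle⟩, _⟩ := happrox k (r n) hrnTk
      have : q = r k := hruniq k q ⟨hqtr, hqle.trans (hrle n)⟩
      exact this ▸ hqle
    have hmem : ∀ x, x ∈ {r | ∃ n, r ∈ tr n ∧ r ≤ s} → ∃ n, x = r n := by
      rintro x ⟨n, hxtr, hxle⟩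
      exact ⟨n, hruniq n x ⟨hxtr, hxle⟩⟩
    have hexn : ∃ n, r n ∉ PΩ := by
      by_contra hall
      push_neg at hall
      obtain ⟨m, hms, hmA, hlub⟩ := hminsup s hs
      have hmP : m ∈ PΩ := by
        apply hPlub _ _ _ m hlub
        · intro x hx
          obtain ⟨n, rfl⟩ := hmem x hx
          exact hall n
        · intro x hx y hy _
          obtain ⟨n, rfl⟩ := hmem x hx
          obtain ⟨k, rfl⟩ := hmem y hy
          rcases le_total n k with h | h
          · exact Or.inl (hmono n k h)
          · exact Or.inr (hmono k n h)
      have : m ∈ (⋂ n, T n) ∩ PΩ := ⟨hmA, hmP⟩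
      rw [hdisj] at this
      exact this
    classical
    let n0 := Nat.find hexn
    have hn0 : r n0 ∉ PΩ := Nat.find_spec hexn
    have hlt : ∀ k < n0, r k ∈ PΩ := fun k hk => by
      have := Nat.find_min hexn hk
      simpa using this
    refine ⟨r n0, ⟨⟨n0, hrtr n0, hn0, ?_⟩, hrle n0⟩, ?_⟩
    · intro k hk q hqtr hqle
      have : q = r k := hruniq k q ⟨hqtr, hqle.trans (hrle n0)⟩
      exact this ▸ hlt k hk
    · rintro y ⟨⟨n, hytr, hyP, hymin⟩, hyle⟩
      have hy : y = r n := hruniq n y ⟨hytr, hyle⟩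
      rcases lt_trichotomy n n0 with h | h | h
      · exact absurd (hy ▸ hlt n h) hyP
      · exact h ▸ hy
      · exact absurd (hymin n0 h (r n0) (hrtr n0) (hy ▸ hmono n0 n h.le)) hn0
end

section
/- If A ⊆ D is a truth value that holds in K (i.e., A ∩ P ≠ ∅), then A^⊥ ∩ P^ω = ∅. Equivalently: no proof-like stack can refute a realized proposition. Moreover if the converse implication (A^⊥ ∩ P^ω = ∅ ⟹ A ∩ P ≠ ∅) holds for all biorthogonally closed A, then K is 2-valued: for every biorthogonally closed A, either A ∩ P ≠ ∅ or (¬A) ∩ P ≠ ∅, where ¬A = A → ∅' for the false truth value, witnessed by λt. t(s⃗) for any s⃗ ∈ A^⊥ ∩ P^ω. -/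
/-- If a truth value `A ⊆ D` holds in `K` (meets `P`) then `A^⊥ ∩ P^ω = ∅` — no
proof-like stack refutes a realized proposition.  Moreover, if conversely
`A^⊥ ∩ P^ω = ∅` implies `A ∩ P ≠ ∅` for all biorthogonally closed `A`, then `K` is
2-valued: for every biorthogonally closed `A`, either `A` or its negation `¬A = A → U`
(with `U = {⊤_D}` the false truth value) contains a proof-like term, the latter
witnessed by `k_{s⃗} = λt. t(s⃗)` for `s⃗ ∈ A^⊥ ∩ P^ω`. -/
theorem realized_has_no_prooflike_refutation_and_two_valuedness {D : Type*}
    (ev : D → (ℕ → D) → Bool)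
    (P : Set D)
    (hP : ∀ t : D, t ∈ P ↔ ∀ π : ℕ → D, (∀ n, π n ∈ P) → ev t π = false)
    (k : (ℕ → D) → D) (hk : ∀ s t r, ev (k s) (consStk t r) = ev t s)
    (Dtop : D) (htop : ∀ π, ev Dtop π = true) :
    (∀ A : Set D, (A ∩ P).Nonempty →
        sorth ev A ∩ {π : ℕ → D | ∀ n, π n ∈ P} = ∅) ∧
    ((∀ A : Set D, torth ev (sorth ev A) = A →
        sorth ev A ∩ {π : ℕ → D | ∀ n, π n ∈ P} = ∅ → (A ∩ P).Nonempty) →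
      ∀ A : Set D, torth ev (sorth ev A) = A →
        (A ∩ P).Nonempty ∨ (impSet ev A {Dtop} ∩ P).Nonempty) := by

  constructor
  · intro A ⟨t, htA, htP⟩
    ext π
    simp only [Set.mem_inter_iff, Set.mem_empty_iff_false, iff_false, not_and]
    intro hπA hπP
    have h1 : ev t π = true := hπA t htA
    have h2 : ev t π = false := (hP t).mp htP π hπP
    simp [h1] at h2
  · intro H A hA
    by_cases hempty : sorth ev A ∩ {π : ℕ → D | ∀ n, π n ∈ P} = ∅
    · exact Or.inl (H A hA hempty)
    · right
      obtain ⟨s, hsA, hsP⟩ := Set.nonempty_iff_ne_empty.mpr hempty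
      refine ⟨k s, ?_, ?_⟩
      · intro t htA ρ _
        rw [hk]
        exact hsA t htA
      · rw [hP]
        intro π hπ
        have : π = consStk (π 0) (fun n => π (n+1)) := by
          funext n; cases n <;> rfl
        rw [this, hk]
        exact (hP (π 0)).mp (hπ 0) s hsP
end
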